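/- arXiv:1512.01258 — 3 statements merged into one kernel-verified Lean document; each statement's English description precedes it below -/
import Mathlib

section
/- Let f ∈ ℚ[x_1,…,x_n] be a form of degree d > 1 with h(f) = h, and suppose f = x_1 v_1 + u_2 v_2 + … + u_h v_h where v_1, u_j, v_j are rational forms of positive degree. Then h(f|_{x_1=0}) = h − 1. -/
open MvPolynomial

/-- The h-invariant (rational Schmidt rank) of a polynomial `f`: the least `h` such that
`f = ∑_{i=1}^h U_i V_i` with all `U_i, V_i` rational forms of positive degree. -/
noncomputable def hInv {n : ℕ} (f : MvPolynomial (Fin n) ℚ) : ℕ :=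
  sInf {h : ℕ | ∃ U V : Fin h → MvPolynomial (Fin n) ℚ,
    (∀ i, ∃ d, 0 < d ∧ (U i).IsHomogeneous d) ∧
    (∀ i, ∃ d, 0 < d ∧ (V i).IsHomogeneous d) ∧
    f = ∑ i, U i * V i}

/-!
Write `g = f|_{x_1=0}`. Substituting `x_1 = 0` into `f = x_1 v_1 + u_2 v_2 + ⋯ + u_h v_h` kills the
first term, so `h(g) ≤ h - 1`. Conversely `f - g = x_1 q` with `q` a form of degree `d - 1 > 0`,
so a shortest decomposition of `g` extended by `x_1 q` is one of `f`, and `h ≤ h(g) + 1`.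
-/

namespace MvPolynomial

variable {σ R : Type*}

theorem X_dvd_sub_aeval_update_zero [CommRing R] [DecidableEq σ] (j : σ)
    (p : MvPolynomial σ R) : X j ∣ p - aeval (Function.update X j 0) p := by
  let π := Ideal.Quotient.mkₐ R (Ideal.span {(X j : MvPolynomial σ R)})
  have hπ : π.comp (aeval (Function.update X j 0)) = π := by
    refine algHom_ext fun i => ?_
    by_cases hij : i = j
    · subst hij
      simp [π]
    · simp [hij]
  rw [← Ideal.mem_span_singleton, ← Ideal.Quotient.eq]
  exact (congrArg (· p) hπ).symm

variable [CommSemiring R]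

theorem IsHomogeneous.of_X_mul {j : σ} {q : MvPolynomial σ R} {m : ℕ}
    (hq : (X j * q).IsHomogeneous m) : q.IsHomogeneous (m - 1) := by
  intro e he
  have h := hq (d := Finsupp.single j 1 + e) (by rwa [coeff_X_mul])
  simp only [map_add, Finsupp.weight_single, Pi.one_apply, smul_eq_mul, mul_one] at h
  show Finsupp.weight 1 e = m - 1
  omega

theorem isHomogeneous_update_X_zero [DecidableEq σ] (j i : σ) :
    (Function.update X j (0 : MvPolynomial σ R) i).IsHomogeneous 1 := by
  by_cases hij : i = j
  · subst hij
    simpa using isHomogeneous_zero σ R 1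
  · simpa [hij] using isHomogeneous_X R i

end MvPolynomial

section FormDecomposition

variable {σ R : Type*} [CommSemiring R]

def IsFormOfPosDegree (p : MvPolynomial σ R) : Prop :=
  ∃ d, 0 < d ∧ p.IsHomogeneous d

/-- `hInv f` is the least `k` with `IsSumOfFormProducts f k`. -/
def IsSumOfFormProducts (f : MvPolynomial σ R) (k : ℕ) : Prop :=
  ∃ U V : Fin k → MvPolynomial σ R,
    (∀ i, IsFormOfPosDegree (U i)) ∧ (∀ i, IsFormOfPosDegree (V i)) ∧ f = ∑ i, U i * V i

theorem IsFormOfPosDegree.aeval {τ : Type*} {p : MvPolynomial σ R}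
    (hp : IsFormOfPosDegree p) {g : σ → MvPolynomial τ R}
    (hg : ∀ i, (g i).IsHomogeneous 1) : IsFormOfPosDegree (aeval g p) := by
  obtain ⟨d, hd, hpd⟩ := hp
  exact ⟨d, hd, by simpa only [one_mul] using hpd.aeval g hg⟩

theorem IsSumOfFormProducts.add_mul {f a b : MvPolynomial σ R} {k : ℕ}
    (hf : IsSumOfFormProducts f k) (ha : IsFormOfPosDegree a) (hb : IsFormOfPosDegree b) :
    IsSumOfFormProducts (a * b + f) (k + 1) := by
  obtain ⟨U, V, hU, hV, rfl⟩ := hf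
  refine ⟨Fin.cons a U, Fin.cons b V, Fin.cases ha hU, Fin.cases hb hV, ?_⟩
  simp [Fin.sum_univ_succ]

theorem isSumOfFormProducts_aeval_update_zero [DecidableEq σ] {j : σ} {k : ℕ}
    {f : MvPolynomial σ R} {U V : Fin (k + 1) → MvPolynomial σ R}
    (hU : ∀ i, IsFormOfPosDegree (U i)) (hV : ∀ i, IsFormOfPosDegree (V i))
    (hU0 : U 0 = X j) (hf : f = ∑ i, U i * V i) :
    IsSumOfFormProducts (aeval (Function.update X j 0) f : MvPolynomial σ R) k := by
  have hlin := isHomogeneous_update_X_zero (R := R) j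
  refine ⟨fun i => aeval (Function.update X j 0) (U i.succ),
    fun i => aeval (Function.update X j 0) (V i.succ),
    fun i => (hU i.succ).aeval hlin, fun i => (hV i.succ).aeval hlin, ?_⟩
  simp [hf, Fin.sum_univ_succ, hU0]

end FormDecomposition

section HInvariant

variable {n : ℕ}

theorem hInv_le {f : MvPolynomial (Fin n) ℚ} {k : ℕ} (hf : IsSumOfFormProducts f k) :
    hInv f ≤ k :=
  Nat.sInf_le hf

theorem isSumOfFormProducts_hInv {f : MvPolynomial (Fin n) ℚ} {k : ℕ}
    (hf : IsSumOfFormProducts f k) : IsSumOfFormProducts f (hInv f) :=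
  Nat.sInf_mem (s := {k | IsSumOfFormProducts f k}) ⟨k, hf⟩

theorem hInv_le_hInv_aeval_update_zero_add_one {f : MvPolynomial (Fin n) ℚ} {d k : ℕ}
    (j : Fin n) (hf : f.IsHomogeneous d) (hd : 1 < d)
    (hg : IsSumOfFormProducts (aeval (Function.update X j 0) f : MvPolynomial (Fin n) ℚ) k) :
    hInv f ≤ hInv (aeval (Function.update X j 0) f) + 1 := by
  obtain ⟨q, hq⟩ := X_dvd_sub_aeval_update_zero j f
  have hg_hom : (aeval (Function.update X j 0) f : MvPolynomial (Fin n) ℚ).IsHomogeneous d := by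
    simpa only [one_mul] using hf.aeval _ (isHomogeneous_update_X_zero j)
  have hq_hom : q.IsHomogeneous (d - 1) := (hq ▸ hf.sub hg_hom).of_X_mul
  apply hInv_le
  convert (isSumOfFormProducts_hInv hg).add_mul ⟨1, one_pos, isHomogeneous_X ℚ j⟩
    ⟨d - 1, by omega, hq_hom⟩
  rw [← hq, sub_add_cancel]

end HInvariant

theorem stmt1 {n d h : ℕ} (hn : 0 < n) (hd : 1 < d) (hh : 0 < h)
    (f : MvPolynomial (Fin n) ℚ) (hf : f.IsHomogeneous d) (hfh : hInv f = h)
    (u v : Fin h → MvPolynomial (Fin n) ℚ)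
    (hu0 : u ⟨0, hh⟩ = X ⟨0, hn⟩)
    (hu : ∀ i, ∃ e, 0 < e ∧ (u i).IsHomogeneous e)
    (hv : ∀ i, ∃ e, 0 < e ∧ (v i).IsHomogeneous e)
    (hsum : f = ∑ i, u i * v i) :
    hInv (aeval (Function.update X ⟨0, hn⟩ 0) f) = h - 1 := by
  obtain ⟨k, rfl⟩ : ∃ k, h = k + 1 := ⟨h - 1, by omega⟩
  have hg := isSumOfFormProducts_aeval_update_zero hu hv hu0 hsum
  have hle := hInv_le hg
  have hge := hInv_le_hInv_aeval_update_zero_add_one _ hf hd hg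
  omega
end

section
/- Let f ∈ ℚ[x_1,…,x_n] be a degree-d form with h(f) = h, satisfying f = (x_1 + ℓ_1) v_1 + … + (x_M + ℓ_M) v_M + u_{M+1} v_{M+1} + … + u_h v_h with each ℓ_i a rational linear form in x_{M+1},…,x_n, 1 ≤ M ≤ h. Define g_M by f(x) = g_M(x) + f(−ℓ_1,…,−ℓ_M, x_{M+1},…,x_n). Then h(g_M) ≥ M. -/
open MvPolynomial

theorem stmt5 {n d h M : ℕ} (hM : 1 ≤ M) (hMh : M ≤ h) (hMn : M ≤ n)
    (f : MvPolynomial (Fin n) ℚ) (hf : f.IsHomogeneous d) (hfh : hInv f = h)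
    (ℓ : Fin M → MvPolynomial (Fin n) ℚ)
    (hℓ : ∀ i, (ℓ i).IsHomogeneous 1 ∧ ∀ j ∈ (ℓ i).vars, M ≤ (j : ℕ))
    (u v : Fin h → MvPolynomial (Fin n) ℚ)
    (hu1 : ∀ (i : Fin h) (hi : (i : ℕ) < M),
      u i = X ⟨(i : ℕ), lt_of_lt_of_le hi hMn⟩ + ℓ ⟨(i : ℕ), hi⟩)
    (hu : ∀ i : Fin h, M ≤ (i : ℕ) → ∃ e, 0 < e ∧ (u i).IsHomogeneous e)
    (hv : ∀ i, ∃ e, 0 < e ∧ (v i).IsHomogeneous e)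
    (hsum : f = ∑ i, u i * v i) :
    M ≤ hInv (f - aeval (fun j : Fin n =>
      if hj : (j : ℕ) < M then -ℓ ⟨(j : ℕ), hj⟩ else X j) f) := by
  classical
  set σf : Fin n → MvPolynomial (Fin n) ℚ :=
    fun j => if hj : (j : ℕ) < M then -ℓ ⟨(j : ℕ), hj⟩ else X j with hσf
  -- each σf j is homogeneous of degree 1
  have hσ1 : ∀ j, (σf j).IsHomogeneous 1 := by
    intro j
    simp only [hσf]
    split
    · exact ((hℓ _).1).neg
    · exact isHomogeneous_X _ _
  -- aeval σf preserves homogeneity degrees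
  have haev : ∀ (p : MvPolynomial (Fin n) ℚ) (e : ℕ), p.IsHomogeneous e →
      (aeval σf p).IsHomogeneous e := by
    intro p e hp
    simpa only [one_mul] using hp.aeval σf hσ1
  -- σf fixes ℓ i
  have hfix : ∀ i, aeval σf (ℓ i) = ℓ i := by
    intro i
    have h2 : (aeval σf : MvPolynomial (Fin n) ℚ →ₐ[ℚ] _).toRingHom (ℓ i)
        = (RingHom.id _) (ℓ i) := by
      apply MvPolynomial.hom_congr_vars
      · ext q
        simp [algebraMap_eq]
      · intro j hj _
        have hjM : M ≤ (j : ℕ) := (hℓ i).2 j hj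
        simp only [AlgHom.toRingHom_eq_coe, RingHom.coe_coe, aeval_X, RingHom.id_apply, hσf]
        rw [dif_neg (by omega)]
      · rfl
    simpa using h2
  -- key: aeval σf (u i) = 0 for i < M
  have hkey : ∀ (i : Fin h), (i : ℕ) < M → aeval σf (u i) = 0 := by
    intro i hi
    rw [hu1 i hi, map_add, aeval_X, hfix]
    simp only [hσf]
    rw [dif_pos hi]
    ring
  have hφf : aeval σf f = ∑ i, aeval σf (u i) * aeval σf (v i) := by
    rw [hsum, map_sum]
    simp [map_mul]
  set g := f - aeval σf f with hg
  -- homogeneity of all u i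
  have huM : ∀ (i : Fin h), ∃ e, 0 < e ∧ (u i).IsHomogeneous e := by
    intro i
    by_cases hi : (i : ℕ) < M
    · refine ⟨1, one_pos, ?_⟩
      rw [hu1 i hi]
      exact (isHomogeneous_X _ _).add (hℓ _).1
    · exact hu i (by omega)
  -- g is in the decomposition set (with 2h terms), so sInf is attained
  have hgmem : (hInv g) ∈ {k : ℕ | ∃ U V : Fin k → MvPolynomial (Fin n) ℚ,
      (∀ i, ∃ d, 0 < d ∧ (U i).IsHomogeneous d) ∧
      (∀ i, ∃ d, 0 < d ∧ (V i).IsHomogeneous d) ∧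
      g = ∑ i, U i * V i} := by
    apply Nat.sInf_mem
    refine ⟨h + h, Fin.addCases u (fun i => -(aeval σf (u i))),
      Fin.addCases v (fun i => aeval σf (v i)), ?_, ?_, ?_⟩
    · intro i
      refine Fin.addCases (fun i => ?_) (fun i => ?_) i
      · simp only [Fin.addCases_left]; exact huM i
      · simp only [Fin.addCases_right]
        obtain ⟨e, he, hue⟩ := huM i
        exact ⟨e, he, (haev _ _ hue).neg⟩
    · intro i
      refine Fin.addCases (fun i => ?_) (fun i => ?_) i
      · simp only [Fin.addCases_left]; exact hv i
      · simp only [Fin.addCases_right]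
        obtain ⟨e, he, hve⟩ := hv i
        exact ⟨e, he, haev _ _ hve⟩
    · rw [hg, Fin.sum_univ_add]
      simp only [Fin.addCases_left, Fin.addCases_right]
      rw [hφf, ← hsum]
      simp only [neg_mul]
      rw [Finset.sum_neg_distrib]
      ring
  obtain ⟨P, Q, hP, hQ, hgeq⟩ := hgmem
  by_contra hcon
  push_neg at hcon
  -- reindexing map
  have hhm : ∀ i : Fin (h - M), M + (i : ℕ) < h := fun i => by omega
  set w : Fin (h - M) → Fin h := fun i => ⟨M + (i : ℕ), hhm i⟩ with hw
  have hre : ∑ i : Fin h, aeval σf (u i) * aeval σf (v i)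
      = ∑ i : Fin (h - M), aeval σf (u (w i)) * aeval σf (v (w i)) := by
    have e : M + (h - M) = h := by omega
    calc ∑ i : Fin h, aeval σf (u i) * aeval σf (v i)
        = ∑ i : Fin (M + (h - M)),
            aeval σf (u (finCongr e i)) * aeval σf (v (finCongr e i)) :=
          (Fintype.sum_equiv (finCongr e) _ _ (fun i => rfl)).symm
      _ = ∑ i : Fin M, (aeval σf (u (finCongr e (Fin.castAdd _ i)))
              * aeval σf (v (finCongr e (Fin.castAdd _ i))))
          + ∑ i : Fin (h - M), (aeval σf (u (finCongr e (Fin.natAdd M i)))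
              * aeval σf (v (finCongr e (Fin.natAdd M i)))) := by
          rw [Fin.sum_univ_add]
      _ = 0 + ∑ i : Fin (h - M), aeval σf (u (w i)) * aeval σf (v (w i)) := by
          refine congrArg₂ (· + ·) ?_ rfl
          apply Finset.sum_eq_zero
          intro i _
          rw [hkey _ (by simp), zero_mul]
      _ = _ := by rw [zero_add]
  -- build decomposition of f with k + (h - M) terms
  have hfmem : (hInv g + (h - M)) ∈ {m : ℕ | ∃ U V : Fin m → MvPolynomial (Fin n) ℚ,
      (∀ i, ∃ d, 0 < d ∧ (U i).IsHomogeneous d) ∧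
      (∀ i, ∃ d, 0 < d ∧ (V i).IsHomogeneous d) ∧
      f = ∑ i, U i * V i} := by
    refine ⟨Fin.addCases P (fun i => aeval σf (u (w i))),
      Fin.addCases Q (fun i => aeval σf (v (w i))), ?_, ?_, ?_⟩
    · intro i
      refine Fin.addCases (fun i => ?_) (fun i => ?_) i
      · simp only [Fin.addCases_left]; exact hP i
      · simp only [Fin.addCases_right]
        obtain ⟨e, he, hue⟩ := huM (w i)
        exact ⟨e, he, haev _ _ hue⟩
    · intro i
      refine Fin.addCases (fun i => ?_) (fun i => ?_) i
      · simp only [Fin.addCases_left]; exact hQ i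
      · simp only [Fin.addCases_right]
        obtain ⟨e, he, hve⟩ := hv (w i)
        exact ⟨e, he, haev _ _ hve⟩
    · rw [Fin.sum_univ_add]
      simp only [Fin.addCases_left, Fin.addCases_right]
      rw [← hgeq, ← hre, ← hφf, hg]
      ring
  have hle : hInv f ≤ hInv g + (h - M) := Nat.sInf_le hfmem
  rw [hfh] at hle
  omega
end

section
/- Let q ∈ ℕ and let b ∈ ℤ[x_1,…,x_n]. For m ∈ ℤ define S̃_{m,q} = Σ_{k ∈ (U_q)^n} e(b(k)·m/q), where U_q is the set of units modulo q and e(x) = e^{2πix}. Then the function B(q) = φ(q)^{−n} Σ_{m ∈ U_q} S̃_{m,q} is multiplicative in q: if gcd(q_1, q_2) = 1 then B(q_1 q_2) = B(q_1) B(q_2). -/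
/-! Summing over `m` first gives `∑_{m ∈ U_q} S̃_{m,q} = ∑_{k ∈ U_qⁿ} c_q(b(k))`, where
`c_q(t) = ∑_{m ∈ U_q} e(tm/q)` is Ramanujan's sum. Ramanujan's sum is multiplicative in `q`:
from `1 = u q₁ + v q₂` we get `e(x/(q₁q₂)) = e(xv/q₁) e(xu/q₂)`, the Chinese remainder theorem
splits `m ∈ U_{q₁q₂}` into a pair of units, and `c_q(t)` does not change when `t` is multiplied by
a unit. As `c_{qᵢ}(b(k))` only depends on `k mod qᵢ`, a second application of the Chinese
remainder theorem, now to `k ∈ U_{q₁q₂}ⁿ`, factors the sum over `k`. -/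

open Finset

/-- The set of units modulo `q`, represented by residues in `[0, q)` coprime to `q`. -/
def Uq (q : ℕ) : Finset ℕ := (range q).filter (fun m => Nat.Coprime m q)

/-- The exponential sum `S̃_{m,q} = ∑_{k ∈ U_q^n} e(b(k) m / q)`. -/
noncomputable def Stilde {n : ℕ} (b : MvPolynomial (Fin n) ℤ) (q m : ℕ) : ℂ :=
  ∑ k ∈ Fintype.piFinset (fun _ : Fin n => Uq q),
    Complex.exp (2 * Real.pi * Complex.I *
      (((MvPolynomial.eval (fun i => (k i : ℤ)) b : ℤ) : ℂ) * (m : ℂ) / (q : ℂ)))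

/-- `B(q) = φ(q)^{-n} ∑_{m ∈ U_q} S̃_{m,q}`. -/
noncomputable def Bq {n : ℕ} (b : MvPolynomial (Fin n) ℤ) (q : ℕ) : ℂ :=
  (1 / ((Nat.totient q : ℂ)) ^ n) * ∑ m ∈ Uq q, Stilde b q m

lemma mem_Uq {q m : ℕ} : m ∈ Uq q ↔ m < q ∧ m.Coprime q := by
  simp [Uq]

lemma val_mem_Uq {q : ℕ} [NeZero q] (u : (ZMod q)ˣ) : (u : ZMod q).val ∈ Uq q :=
  mem_Uq.2 ⟨ZMod.val_lt _, ZMod.val_coe_unit_coprime u⟩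

lemma val_unitOfCoprime_of_mem_Uq {q m : ℕ} (hm : m ∈ Uq q) :
    (ZMod.unitOfCoprime m (mem_Uq.1 hm).2 : ZMod q).val = m := by
  rw [ZMod.coe_unitOfCoprime, ZMod.val_natCast, Nat.mod_eq_of_lt (mem_Uq.1 hm).1]

lemma sum_piFinset_Uq_eq_sum_units {M ι : Type*} [AddCommMonoid M] [Fintype ι] [DecidableEq ι]
    (q : ℕ) [NeZero q] (f : (ι → ZMod q) → M) :
    ∑ k ∈ Fintype.piFinset (fun _ : ι => Uq q), f (fun i => k i) =
      ∑ u : ι → (ZMod q)ˣ, f (fun i => u i) :=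
  Finset.sum_bij'
    (fun k hk i => ZMod.unitOfCoprime (k i) (mem_Uq.1 (Fintype.mem_piFinset.1 hk i)).2)
    (fun u _ i => (u i : ZMod q).val) (fun _ _ => mem_univ _)
    (fun u _ => Fintype.mem_piFinset.2 fun i => val_mem_Uq (u i))
    (fun _ hk => funext fun i => val_unitOfCoprime_of_mem_Uq (Fintype.mem_piFinset.1 hk i))
    (fun _ _ => funext fun _ => Units.ext (ZMod.natCast_zmod_val _)) (fun _ _ => rfl)

lemma MvPolynomial.intCast_eval_eq_aeval {σ R : Type*} [CommRing R] (x : σ → ℤ)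
    (b : MvPolynomial σ ℤ) :
    ((MvPolynomial.eval x b : ℤ) : R) = MvPolynomial.aeval (fun i => (x i : R)) b := by
  rw [← MvPolynomial.coe_aeval_eq_eval]
  exact MvPolynomial.comp_aeval_apply (f := x) (Int.castRingHom R).toIntAlgHom b

lemma ZMod.cast_aeval {σ : Type*} {m q : ℕ} (hdvd : m ∣ q) (x : σ → ZMod q)
    (b : MvPolynomial σ ℤ) :
    ((MvPolynomial.aeval x b).cast : ZMod m) = MvPolynomial.aeval (fun i => (x i).cast) b :=
  MvPolynomial.comp_aeval_apply (f := x) (ZMod.castHom hdvd (ZMod m)).toIntAlgHom b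

noncomputable def ramanujanSum (q : ℕ) [NeZero q] (t : ZMod q) : ℂ :=
  ∑ u : (ZMod q)ˣ, ZMod.stdAddChar (t * (u : ZMod q))

lemma ramanujanSum_eq_sum_Uq (q : ℕ) [NeZero q] (t : ZMod q) :
    ramanujanSum q t = ∑ m ∈ Uq q, ZMod.stdAddChar (t * (m : ZMod q)) :=
  Eq.symm <| Finset.sum_bij' (fun m hm => ZMod.unitOfCoprime m (mem_Uq.1 hm).2)
    (fun u _ => (u : ZMod q).val) (fun _ _ => mem_univ _) (fun u _ => val_mem_Uq u)
    (fun _ hm => val_unitOfCoprime_of_mem_Uq hm) (fun _ _ => Units.ext (ZMod.natCast_zmod_val _))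
    (fun _ _ => rfl)

lemma ramanujanSum_mul_unit (q : ℕ) [NeZero q] (t : ZMod q) (c : (ZMod q)ˣ) :
    ramanujanSum q (t * c) = ramanujanSum q t :=
  Fintype.sum_equiv (Equiv.mulLeft c) _ _ fun _ => by simp [mul_assoc]

def unitsChineseRemainder {q₁ q₂ : ℕ} (h : q₁.Coprime q₂) :
    (ZMod (q₁ * q₂))ˣ ≃* (ZMod q₁)ˣ × (ZMod q₂)ˣ :=
  (Units.mapEquiv (ZMod.chineseRemainder h).toMulEquiv).trans MulEquiv.prodUnits

@[simp]
lemma coe_unitsChineseRemainder_fst {q₁ q₂ : ℕ} (h : q₁.Coprime q₂) (u : (ZMod (q₁ * q₂))ˣ) :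
    ((unitsChineseRemainder h u).1 : ZMod q₁) = (u : ZMod (q₁ * q₂)).cast :=
  Prod.fst_zmod_cast _

@[simp]
lemma coe_unitsChineseRemainder_snd {q₁ q₂ : ℕ} (h : q₁.Coprime q₂) (u : (ZMod (q₁ * q₂))ˣ) :
    ((unitsChineseRemainder h u).2 : ZMod q₂) = (u : ZMod (q₁ * q₂)).cast :=
  Prod.snd_zmod_cast _

lemma exists_stdAddChar_eq_mul {q₁ q₂ : ℕ} [NeZero q₁] [NeZero q₂] (h : q₁.Coprime q₂) :
    ∃ (c₁ : (ZMod q₁)ˣ) (c₂ : (ZMod q₂)ˣ), ∀ x : ZMod (q₁ * q₂),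
      ZMod.stdAddChar x =
        ZMod.stdAddChar (x.cast * c₁ : ZMod q₁) * ZMod.stdAddChar (x.cast * c₂ : ZMod q₂) := by
  have hbezout : (q₁ : ℤ) * q₁.gcdA q₂ + q₂ * q₁.gcdB q₂ = 1 := by
    rw [← Nat.gcd_eq_gcd_ab, h.gcd_eq_one, Nat.cast_one]
  have hunit₁ : IsUnit (q₁.gcdB q₂ : ZMod q₁) := by
    refine IsUnit.of_mul_eq_one_right (q₂ : ZMod q₁) ?_
    simpa using congrArg (Int.cast : ℤ → ZMod q₁) hbezout
  have hunit₂ : IsUnit (q₁.gcdA q₂ : ZMod q₂) := by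
    refine IsUnit.of_mul_eq_one_right (q₁ : ZMod q₂) ?_
    simpa using congrArg (Int.cast : ℤ → ZMod q₂) hbezout
  refine ⟨hunit₁.unit, hunit₂.unit, fun x => ?_⟩
  obtain ⟨X, rfl⟩ := ZMod.intCast_surjective x
  rw [IsUnit.unit_spec, IsUnit.unit_spec, ZMod.cast_intCast (dvd_mul_right q₁ q₂),
    ZMod.cast_intCast (dvd_mul_left q₂ q₁), ← Int.cast_mul, ← Int.cast_mul, ZMod.stdAddChar_coe,
    ZMod.stdAddChar_coe, ZMod.stdAddChar_coe, ← Complex.exp_add]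
  congr 1
  have hq₁ : (q₁ : ℂ) ≠ 0 := NeZero.ne _
  have hq₂ : (q₂ : ℂ) ≠ 0 := NeZero.ne _
  have hbezoutC : (q₁ : ℂ) * q₁.gcdA q₂ + q₂ * q₁.gcdB q₂ = 1 := by exact_mod_cast hbezout
  push_cast
  field_simp
  linear_combination -(X : ℂ) * hbezoutC

lemma ramanujanSum_mul {q₁ q₂ : ℕ} [NeZero q₁] [NeZero q₂] (h : q₁.Coprime q₂)
    (t : ZMod (q₁ * q₂)) :
    ramanujanSum (q₁ * q₂) t = ramanujanSum q₁ t.cast * ramanujanSum q₂ t.cast := by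
  obtain ⟨c₁, c₂, hψ⟩ := exists_stdAddChar_eq_mul h
  rw [← ramanujanSum_mul_unit q₁ _ c₁, ← ramanujanSum_mul_unit q₂ _ c₂, ramanujanSum,
    ramanujanSum, ramanujanSum, Fintype.sum_mul_sum, ← Fintype.sum_prod_type',
    ← (unitsChineseRemainder h).toEquiv.sum_comp]
  refine Fintype.sum_congr _ _ fun u => ?_
  simp only [hψ, MulEquiv.toEquiv_eq_coe, EquivLike.coe_coe, coe_unitsChineseRemainder_fst,
    coe_unitsChineseRemainder_snd, ZMod.cast_mul (dvd_mul_right q₁ q₂),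
    ZMod.cast_mul (dvd_mul_left q₂ q₁)]
  ring_nf

noncomputable def evalRamanujanSum {n : ℕ} (b : MvPolynomial (Fin n) ℤ) (q : ℕ) [NeZero q] : ℂ :=
  ∑ k : Fin n → (ZMod q)ˣ, ramanujanSum q (MvPolynomial.aeval (fun i => (k i : ZMod q)) b)

lemma evalRamanujanSum_mul {n : ℕ} (b : MvPolynomial (Fin n) ℤ) {q₁ q₂ : ℕ} [NeZero q₁]
    [NeZero q₂] (h : q₁.Coprime q₂) :
    evalRamanujanSum b (q₁ * q₂) = evalRamanujanSum b q₁ * evalRamanujanSum b q₂ := by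
  rw [evalRamanujanSum, evalRamanujanSum, evalRamanujanSum, Fintype.sum_mul_sum,
    ← Fintype.sum_prod_type',
    ← ((Equiv.piCongrRight fun _ => (unitsChineseRemainder h).toEquiv).trans
      (Equiv.arrowProdEquivProdArrow _ _ _)).sum_comp]
  refine Fintype.sum_congr _ _ fun k => ?_
  rw [ramanujanSum_mul h]
  simp [ZMod.cast_aeval (dvd_mul_right q₁ q₂), ZMod.cast_aeval (dvd_mul_left q₂ q₁)]

lemma Bq_eq {n : ℕ} (b : MvPolynomial (Fin n) ℤ) (q : ℕ) [NeZero q] :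
    Bq b q = evalRamanujanSum b q / (Nat.totient q : ℂ) ^ n := by
  have hterm : ∀ (k : Fin n → ℕ) (m : ℕ),
      Complex.exp (2 * Real.pi * Complex.I *
        (((MvPolynomial.eval (fun i => (k i : ℤ)) b : ℤ) : ℂ) * (m : ℂ) / (q : ℂ))) =
      ZMod.stdAddChar (MvPolynomial.aeval (fun i => (k i : ZMod q)) b * (m : ZMod q)) := by
    intro k m
    have hcast : MvPolynomial.aeval (fun i => (k i : ZMod q)) b * (m : ZMod q) =
        ((MvPolynomial.eval (fun i => (k i : ℤ)) b * m : ℤ) : ZMod q) := by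
      rw [Int.cast_mul, MvPolynomial.intCast_eval_eq_aeval]
      simp
    rw [hcast, ZMod.stdAddChar_coe]
    push_cast
    ring_nf
  rw [Bq, one_div_mul_eq_div, evalRamanujanSum,
    ← sum_piFinset_Uq_eq_sum_units q fun x => ramanujanSum q (MvPolynomial.aeval x b)]
  simp only [Stilde, hterm, ramanujanSum_eq_sum_Uq]
  rw [Finset.sum_comm]

lemma Bq_zero {n : ℕ} (b : MvPolynomial (Fin n) ℤ) : Bq b 0 = 0 := by
  simp [Bq, Uq]

theorem stmt12_general {n : ℕ} (b : MvPolynomial (Fin n) ℤ) (q₁ q₂ : ℕ)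
    (h : Nat.Coprime q₁ q₂) :
    Bq b (q₁ * q₂) = Bq b q₁ * Bq b q₂ := by
  rcases Nat.eq_zero_or_pos q₁ with rfl | hq₁
  · simp [Bq_zero]
  rcases Nat.eq_zero_or_pos q₂ with rfl | hq₂
  · simp [Bq_zero]
  have := NeZero.of_pos hq₁
  have := NeZero.of_pos hq₂
  rw [Bq_eq, Bq_eq, Bq_eq, evalRamanujanSum_mul b h, Nat.totient_mul h]
  push_cast
  ring

theorem stmt12 {n : ℕ} (b : MvPolynomial (Fin n) ℤ) (q₁ q₂ : ℕ)
    (hq₁ : 0 < q₁) (hq₂ : 0 < q₂) (h : Nat.Coprime q₁ q₂) :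
    Bq b (q₁ * q₂) = Bq b q₁ * Bq b q₂ :=
  stmt12_general b q₁ q₂ h
end
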